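/- For n ≥ 2k-t-ε and k-t-ε ≥ 1, the anticode A_q(t-1, ε+2, k, n) has strictly more elements than A_q(t, ε, k, n) if and only if q-1 > (n-t-ε)/(k-t-ε), equivalently n < (q-2)(k-t-ε)+k. (Both anticodes have Hamming diameter 2k-2t-ε.) -/

import Mathlib

open Finset

/-- The anticode `A_q(t,ε,k,n)`: words with 1's in the first `t` coordinates,
arbitrary nonzero symbols in the next `ε` coordinates, and exactly `k-t-ε`
nonzero entries in the remaining `n-t-ε` coordinates. -/
def anticodeA (q n t ε k : ℕ) : Finset (Fin n → Fin q) :=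
  (univ : Finset (Fin n → Fin q)).filter (fun x =>
    (∀ i : Fin n, (i : ℕ) < t → (x i : ℕ) = 1) ∧
    (∀ i : Fin n, t ≤ (i : ℕ) → (i : ℕ) < t + ε → (x i : ℕ) ≠ 0) ∧
    (univ.filter (fun i : Fin n => t + ε ≤ (i : ℕ) ∧ (x i : ℕ) ≠ 0)).card = k - t - ε)

/-!
A word of `A_q(t,ε,k,n)` is a choice of the `K = k-t-ε` nonzero positions among the last
`N = n-t-ε` coordinates together with nonzero symbols on them and on the `ε` middle coordinates,
so `|A_q(t,ε,k,n)| = C(N,K) (q-1)^(k-t)`. Passing to `(t-1, ε+2)` turns `C(N,K)` into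
`C(N-1,K-1)` and gains a factor `q-1`; as `K C(N,K) = N C(N-1,K-1)`, the second anticode is
larger exactly when `N < (q-1) K`.
-/

lemma Fin.card_filter_val_eq {q c : ℕ} (hc : c < q) : #{a : Fin q | (a : ℕ) = c} = 1 := by
  simp [← Fin.ext_iff (b := ⟨c, hc⟩), filter_eq']

lemma Fin.card_filter_val_ne_zero {q : ℕ} : #{a : Fin q | (a : ℕ) ≠ 0} = q - 1 := by
  rcases q with _ | q
  · rfl
  · simp [filter_ne', card_erase_of_mem]

lemma Fin.card_filter_le_val_lt {n a b : ℕ} (hb : b ≤ n) :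
    #{i : Fin n | a ≤ (i : ℕ) ∧ (i : ℕ) < b} = b - a := by
  rw [← Nat.card_Ico, ← card_map Fin.valEmbedding]
  congr 1
  ext m
  simp only [mem_map, mem_filter, mem_univ, true_and, Fin.valEmbedding_apply, mem_Ico]
  exact ⟨by rintro ⟨i, hi, rfl⟩; exact hi, fun hm => ⟨⟨m, by omega⟩, hm, rfl⟩⟩

lemma Fin.card_filter_le_val {n a : ℕ} : #{i : Fin n | a ≤ (i : ℕ)} = n - a := by
  simpa using Fin.card_filter_le_val_lt (n := n) (a := a) le_rfl

section WeightCount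

variable {ι α : Type*} [Fintype ι] [DecidableEq ι] [Fintype α] [DecidableEq α]
  (P : ι → α → Prop) [∀ i, DecidablePred (P i)] (T : Finset ι) (N : Finset α)

def supportBox (s : Finset ι) (i : ι) : Finset α :=
  if i ∈ T then (if i ∈ s then N else Nᶜ) else ({a | P i a} : Finset α)

lemma filter_support_eq_eq_piFinset_supportBox {s : Finset ι} (hs : s ⊆ T) :
    ({x | (∀ i ∉ T, P i (x i)) ∧ {i ∈ T | x i ∈ N} = s} : Finset (ι → α)) =
      Fintype.piFinset (supportBox P T N s) := by
  ext x
  simp only [mem_filter, mem_univ, true_and, Fintype.mem_piFinset, supportBox]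
  constructor
  · rintro ⟨hP, rfl⟩ i
    split_ifs <;> simp_all
  · intro hx
    refine ⟨fun i hi => by simpa [hi] using hx i, ?_⟩
    ext i
    have := hx i
    have := @hs i
    by_cases hiT : i ∈ T <;> by_cases his : i ∈ s <;> simp_all

lemma card_piFinset_supportBox {s : Finset ι} (hs : s ⊆ T) :
    #(Fintype.piFinset (supportBox P T N s)) =
      (∏ i ∈ Tᶜ, #{a | P i a}) * (#N ^ #s * #Nᶜ ^ (#T - #s)) := by
  rw [Fintype.card_piFinset, ← prod_mul_prod_compl T, mul_comm]
  congr 1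
  · exact prod_congr rfl fun i hi => by rw [supportBox, if_neg (mem_compl.mp hi)]
  · rw [prod_congr rfl fun i hi => by rw [supportBox, if_pos hi, apply_ite card], prod_ite,
      prod_const, prod_const, filter_not, filter_mem_eq_inter, inter_eq_right.mpr hs,
      card_sdiff_of_subset hs]

theorem card_filter_forall_and_card_filter_mem_eq (m : ℕ) :
    #{x : ι → α | (∀ i ∉ T, P i (x i)) ∧ #{i ∈ T | x i ∈ N} = m} =
      (∏ i ∈ Tᶜ, #{a | P i a}) * ((#T).choose m * #N ^ m * #Nᶜ ^ (#T - m)) := by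
  rw [card_eq_sum_card_fiberwise (f := fun x => {i ∈ T | x i ∈ N}) (t := T.powersetCard m)
    (fun x hx => mem_powersetCard.mpr ⟨filter_subset _ _, (mem_filter.mp hx).2.2⟩)]
  have hfiber : ∀ s ∈ T.powersetCard m,
      #{x ∈ {x : ι → α | (∀ i ∉ T, P i (x i)) ∧ #{i ∈ T | x i ∈ N} = m} |
          {i ∈ T | x i ∈ N} = s} = (∏ i ∈ Tᶜ, #{a | P i a}) * (#N ^ m * #Nᶜ ^ (#T - m)) := by
    intro s hs
    obtain ⟨hsT, rfl⟩ := mem_powersetCard.mp hs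
    rw [filter_filter, ← card_piFinset_supportBox P T N hsT,
      ← filter_support_eq_eq_piFinset_supportBox P T N hsT]
    congr 2
    ext x
    constructor
    · rintro ⟨⟨h, -⟩, h'⟩; exact ⟨h, h'⟩
    · rintro ⟨h, rfl⟩; exact ⟨⟨h, rfl⟩, rfl⟩
  rw [sum_congr rfl hfiber, sum_const, card_powersetCard, smul_eq_mul]
  ring

end WeightCount

lemma card_anticodeA {q n t ε k : ℕ} (hq : 2 ≤ q) (htk : t + ε ≤ k) (hkn : k ≤ n) :
    #(anticodeA q n t ε k) = (n - t - ε).choose (k - t - ε) * (q - 1) ^ (k - t) := by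
  let P : Fin n → Fin q → Prop := fun i a =>
    ((i : ℕ) < t → (a : ℕ) = 1) ∧ (t ≤ (i : ℕ) → (a : ℕ) ≠ 0)
  let T : Finset (Fin n) := {i | t + ε ≤ (i : ℕ)}
  let N : Finset (Fin q) := {a | (a : ℕ) ≠ 0}
  have hT : #T = n - t - ε := by rw [Fin.card_filter_le_val]; omega
  have hN : #N = q - 1 := Fin.card_filter_val_ne_zero
  have hNc : #Nᶜ = 1 := by rw [card_compl, hN, Fintype.card_fin]; omega
  have hP : ∏ i ∈ Tᶜ, #{a | P i a} = (q - 1) ^ ε := by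
    have hcard : ∀ i ∈ Tᶜ, #{a | P i a} = if (i : ℕ) < t then 1 else q - 1 := by
      intro i hi
      split_ifs with h
      · simpa [P, h, not_le.mpr h] using Fin.card_filter_val_eq (by omega : 1 < q)
      · simpa [P, h, not_lt.mp h] using Fin.card_filter_val_ne_zero
    rw [prod_congr rfl hcard, prod_ite, prod_const_one, one_mul, prod_const]
    congr 1
    rw [← add_tsub_cancel_left t ε, ← Fin.card_filter_le_val_lt (n := n) (a := t) (by omega)]
    congr 1
    ext i
    simp only [T, mem_filter, mem_compl, mem_univ, true_and]
    omega
  -- Not `rw`: over `Fin n` the instance deciding `∀ i ∉ T, _` is `Nat.decidableForallFin`,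
  -- not the one in the general lemma.
  trans (∏ i ∈ Tᶜ, #{a | P i a}) * ((#T).choose (k - t - ε) * #N ^ (k - t - ε) *
    #Nᶜ ^ (#T - (k - t - ε)))
  · rw [← card_filter_forall_and_card_filter_mem_eq P T N]
    congr 1
    ext x
    simp only [anticodeA, T, N, P, mem_filter, mem_univ, true_and, filter_filter, not_le]
    rw [← and_assoc]
    exact and_congr_left fun _ => ⟨fun ⟨h1, h2⟩ i hi => ⟨h1 i, fun hti => h2 i hti hi⟩,
      fun h => ⟨fun i hit => (h i (by omega)).1 hit, fun i hti hi => (h i hi).2 hti⟩⟩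
  have hpow : (q - 1) ^ (k - t) = (q - 1) ^ ε * (q - 1) ^ (k - t - ε) := by
    rw [← pow_add]; congr 1; omega
  rw [hT, hN, hNc, hP, one_pow, mul_one, hpow]
  ring

lemma Nat.succ_choose_succ_lt_choose_mul_iff {N K r : ℕ} (hK : K ≤ N) :
    (N + 1).choose (K + 1) < N.choose K * r ↔ N + 1 < r * (K + 1) := by
  rw [← Nat.mul_lt_mul_right K.succ_pos, ← Nat.add_one_mul_choose_eq, mul_assoc,
    mul_comm (N.choose K), Nat.mul_lt_mul_right (Nat.choose_pos hK)]

theorem compare_anticodes_general (q n t ε k : ℕ) (hq : 3 ≤ q) (ht : 1 ≤ t)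
    (hε : t + ε < k) (hkn : k ≤ n) :
    ((anticodeA q n t ε k).card < (anticodeA q n (t - 1) (ε + 2) k).card ↔
      n - t - ε < (q - 1) * (k - t - ε)) ∧
    (n - t - ε < (q - 1) * (k - t - ε) ↔ n < (q - 2) * (k - t - ε) + k) := by
  obtain ⟨K, hK⟩ : ∃ K, k - t - ε = K + 1 := ⟨k - t - ε - 1, by omega⟩
  obtain ⟨M, hM⟩ : ∃ M, n - t - ε = M + 1 := ⟨n - t - ε - 1, by omega⟩
  obtain ⟨r, rfl⟩ : ∃ r, q = r + 2 := ⟨q - 2, by omega⟩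
  rw [card_anticodeA (by omega) hε.le hkn, card_anticodeA (by omega) (by omega) hkn,
    show n - (t - 1) - (ε + 2) = M by omega, show k - (t - 1) - (ε + 2) = K by omega,
    show k - (t - 1) = k - t + 1 by omega, hK, hM, pow_succ, ← mul_assoc, mul_right_comm,
    Nat.mul_lt_mul_right (pow_pos (by omega) _), show r + 2 - 1 = r + 1 by omega,
    Nat.add_sub_cancel]
  exact ⟨Nat.succ_choose_succ_lt_choose_mul_iff (by omega), by rw [add_one_mul]; omega⟩

/-- For `n ≥ 2k-t-ε` and `k-t-ε ≥ 1`, the anticode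
`A_q(t-1, ε+2, k, n)` has strictly more elements than `A_q(t, ε, k, n)` if and only
if `q-1 > (n-t-ε)/(k-t-ε)`, equivalently `n < (q-2)(k-t-ε)+k`. -/
theorem compare_anticodes (q n t ε k : ℕ) (hq : 3 ≤ q) (ht : 1 ≤ t)
    (hε : t + ε < k) (hkn : k ≤ n) (hn : 2 * k - t - ε ≤ n) :
    ((anticodeA q n t ε k).card < (anticodeA q n (t - 1) (ε + 2) k).card ↔
      n - t - ε < (q - 1) * (k - t - ε)) ∧
    (n - t - ε < (q - 1) * (k - t - ε) ↔ n < (q - 2) * (k - t - ε) + k) :=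
  compare_anticodes_general q n t ε k hq ht hε hkn
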